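/- arXiv:1611.07712 — 5 statements merged into one kernel-verified Lean document; each statement's English description precedes it below -/
import Mathlib

section
/- Let (Ω, P) be a probability space and let u : Ω → ℝ^n and v : Ω → ℝ^M be random vectors such that all entrywise products u_i u_j, u_i v_k, and v_k v_l are integrable. Set F = E[u uᵀ] ∈ ℝ^{n×n}, S = E[v vᵀ] ∈ ℝ^{M×M}, and let Φ ∈ ℝ^{M×n} be the matrix with Φᵀ = E[u vᵀ]. If S is positive definite, then Φᵀ S⁻¹ Φ ⪯ F in the Loewner order, i.e., F − Φᵀ S⁻¹ Φ is positive semidefinite. -/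
/-!
The second-moment matrix of the stacked vector `(u, v)` is the block matrix `[F Φᵀ; Φ S]`.
Its quadratic form at `(x, y)` is `E[(xᵀu + yᵀv)²] ≥ 0`, so it is positive semidefinite, and
`F - Φᵀ S⁻¹ Φ` is its Schur complement with respect to the positive definite block `S`.
-/

open MeasureTheory Matrix

namespace MeasureTheory

variable {Ω ι κ : Type*} [MeasurableSpace Ω] {μ : Measure Ω}

/-- The matrix `E[u vᵀ]`. -/
noncomputable def crossMoment (μ : Measure Ω) (u : Ω → ι → ℝ) (v : Ω → κ → ℝ) : Matrix ι κ ℝ :=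
  of fun i k => ∫ ω, u ω i * v ω k ∂μ

theorem crossMoment_transpose (u : Ω → ι → ℝ) (v : Ω → κ → ℝ) :
    (crossMoment μ u v)ᵀ = crossMoment μ v u := by
  ext k i
  simp only [crossMoment, transpose_apply, of_apply, mul_comm]

theorem crossMoment_sumElim (u : Ω → ι → ℝ) (v : Ω → κ → ℝ) :
    crossMoment μ (fun ω => Sum.elim (u ω) (v ω)) (fun ω => Sum.elim (u ω) (v ω)) =
      fromBlocks (crossMoment μ u u) (crossMoment μ u v) (crossMoment μ v u)
        (crossMoment μ v v) := by
  ext (i | k) (j | l) <;> rfl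

theorem integral_dotProduct_mul_dotProduct [Fintype ι] [Fintype κ]
    {u : Ω → ι → ℝ} {v : Ω → κ → ℝ} (huv : ∀ i k, Integrable (fun ω => u ω i * v ω k) μ)
    (x : ι → ℝ) (y : κ → ℝ) :
    ∫ ω, (x ⬝ᵥ u ω) * (y ⬝ᵥ v ω) ∂μ = x ⬝ᵥ crossMoment μ u v *ᵥ y := by
  have hterm : ∀ i k, Integrable (fun ω => x i * u ω i * (y k * v ω k)) μ := fun i k =>
    ((huv i k).const_mul (x i * y k)).congr (ae_of_all _ fun ω => by ring)
  simp only [dotProduct, Finset.sum_mul_sum]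
  simp only [mulVec, dotProduct, crossMoment, of_apply, Finset.mul_sum]
  rw [integral_finsetSum _ fun i _ => integrable_finsetSum _ fun k _ => hterm i k]
  refine Finset.sum_congr rfl fun i _ => ?_
  rw [integral_finsetSum _ fun k _ => hterm i k]
  refine Finset.sum_congr rfl fun k _ => ?_
  rw [← integral_mul_const, ← integral_const_mul]
  congr 1 with ω
  ring

theorem posSemidef_crossMoment_self [Fintype ι] {w : Ω → ι → ℝ}
    (hw : ∀ i j, Integrable (fun ω => w ω i * w ω j) μ) :
    (crossMoment μ w w).PosSemidef := by
  refine .of_dotProduct_mulVec_nonneg ?_ fun x => ?_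
  · rw [IsHermitian, conjTranspose_eq_transpose_of_trivial, crossMoment_transpose]
  · rw [star_trivial, ← integral_dotProduct_mul_dotProduct hw]
    exact integral_nonneg fun ω => mul_self_nonneg _

end MeasureTheory

theorem pearson_information_lower_bound_general
    {Ω : Type*} [MeasurableSpace Ω] (P : Measure Ω)
    {n M : ℕ} (u : Ω → Fin n → ℝ) (v : Ω → Fin M → ℝ)
    (huu : ∀ i j, Integrable (fun ω => u ω i * u ω j) P)
    (huv : ∀ i k, Integrable (fun ω => u ω i * v ω k) P)
    (hvv : ∀ k l, Integrable (fun ω => v ω k * v ω l) P)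
    (F : Matrix (Fin n) (Fin n) ℝ) (S : Matrix (Fin M) (Fin M) ℝ)
    (Φ : Matrix (Fin M) (Fin n) ℝ)
    (hF : F = Matrix.of fun i j => ∫ ω, u ω i * u ω j ∂P)
    (hS : S = Matrix.of fun k l => ∫ ω, v ω k * v ω l ∂P)
    (hΦ : Φᵀ = Matrix.of fun i k => ∫ ω, u ω i * v ω k ∂P)
    (hSpd : S.PosDef) :
    (F - Φᵀ * S⁻¹ * Φ).PosSemidef := by
  have hw : ∀ a b, Integrable (fun ω => Sum.elim (u ω) (v ω) a * Sum.elim (u ω) (v ω) b) P := by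
    rintro (i | k) (j | l)
    · exact huu i j
    · exact huv i l
    · exact (huv j k).congr (ae_of_all _ fun ω => mul_comm _ _)
    · exact hvv k l
  have hF' : F = crossMoment P u u := hF
  have hS' : S = crossMoment P v v := hS
  have hΦ' : Φ = crossMoment P v u := by
    rw [← crossMoment_transpose, ← transpose_transpose Φ, hΦ]
    rfl
  have hblock : (fromBlocks F Φᵀ Φ S).PosSemidef := by
    rw [hF', hS', hΦ', crossMoment_transpose, ← crossMoment_sumElim]
    exact posSemidef_crossMoment_self hw
  have := hSpd.isUnit.invertible
  have hschur := (PosDef.fromBlocks₂₂ F Φᵀ hSpd).mp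
  simp only [conjTranspose_eq_transpose_of_trivial, transpose_transpose] at hschur
  exact hschur hblock

/-- Theorem 1 (Pearson information bound): with F = E[uuᵀ], S = E[vvᵀ], Φᵀ = E[uvᵀ],
if S is positive definite then Φᵀ S⁻¹ Φ ⪯ F in the Loewner order. -/
theorem pearson_information_lower_bound
    {Ω : Type*} [MeasurableSpace Ω] (P : Measure Ω) [IsProbabilityMeasure P]
    {n M : ℕ} (u : Ω → Fin n → ℝ) (v : Ω → Fin M → ℝ)
    (huu : ∀ i j, Integrable (fun ω => u ω i * u ω j) P)
    (huv : ∀ i k, Integrable (fun ω => u ω i * v ω k) P)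
    (hvv : ∀ k l, Integrable (fun ω => v ω k * v ω l) P)
    (F : Matrix (Fin n) (Fin n) ℝ) (S : Matrix (Fin M) (Fin M) ℝ)
    (Φ : Matrix (Fin M) (Fin n) ℝ)
    (hF : F = Matrix.of fun i j => ∫ ω, u ω i * u ω j ∂P)
    (hS : S = Matrix.of fun k l => ∫ ω, v ω k * v ω l ∂P)
    (hΦ : Φᵀ = Matrix.of fun i k => ∫ ω, u ω i * v ω k ∂P)
    (hSpd : S.PosDef) :
    (F - Φᵀ * S⁻¹ * Φ).PosSemidef :=
  pearson_information_lower_bound_general P u v huu huv hvv F S Φ hF hS hΦ hSpd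
end

section
/- Let (Ω, P) be a probability space and let u : Ω → ℝ^n and v : Ω → ℝ^M be random vectors such that all entrywise products u_i u_j, u_i v_k, and v_k v_l are integrable. Set F = E[u uᵀ], S = E[v vᵀ], and let Φ ∈ ℝ^{M×n} satisfy Φᵀ = E[u vᵀ]. Let W ∈ ℝ^{M×n} be any matrix such that Wᵀ S W is invertible. Then 0 ⪯ Φᵀ W (Wᵀ S W)⁻¹ Wᵀ Φ ⪯ F in the Loewner order. -/
open MeasureTheory Matrix

private lemma psd_conj {k m : Type*} [Fintype k] [Fintype m] [DecidableEq k]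
    {H : Matrix k k ℝ} (hH : H.PosSemidef) (A : Matrix m k ℝ) :
    (A * H * Aᵀ).PosSemidef := by
  have := hH.mul_mul_conjTranspose_same A
  rwa [Matrix.conjTranspose_eq_transpose_of_trivial] at this

private lemma secondMoment_posSemidef {Ω : Type*} [MeasurableSpace Ω] (P : Measure Ω)
    {n : ℕ} (z : Ω → Fin n → ℝ)
    (hzz : ∀ i j, Integrable (fun ω => z ω i * z ω j) P) :
    (Matrix.of fun i j => ∫ ω, z ω i * z ω j ∂P).PosSemidef := by
  refine Matrix.posSemidef_iff_dotProduct_mulVec.mpr ⟨?_, ?_⟩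
  · ext i j
    simp only [Matrix.conjTranspose_apply, Matrix.of_apply, star_trivial]
    simp_rw [mul_comm]
  · intro x
    have hint : ∀ i j, Integrable (fun ω => x i * (z ω i * z ω j) * x j) P := by
      intro i j
      exact ((hzz i j).const_mul (x i)).mul_const (x j)
    have key : star x ⬝ᵥ ((Matrix.of fun i j => ∫ ω, z ω i * z ω j ∂P) *ᵥ x)
        = ∫ ω, (∑ i, x i * z ω i) ^ 2 ∂P := by
      have h1 : ∀ ω, (∑ i, x i * z ω i) ^ 2
          = ∑ i, ∑ j, x i * (z ω i * z ω j) * x j := by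
        intro ω
        rw [sq, Finset.sum_mul_sum]
        exact Finset.sum_congr rfl fun i _ => Finset.sum_congr rfl fun j _ => by ring
      simp_rw [h1]
      rw [integral_finset_sum _ fun i _ =>
        integrable_finset_sum _ fun j _ => hint i j]
      simp only [dotProduct, Matrix.mulVec, Matrix.of_apply, star_trivial,
        Finset.mul_sum]
      refine Finset.sum_congr rfl fun i _ => ?_
      rw [integral_finset_sum _ fun j _ => hint i j]
      refine Finset.sum_congr rfl fun j _ => ?_
      rw [show (∫ ω, x i * (z ω i * z ω j) * x j ∂P)
          = x i * (∫ ω, z ω i * z ω j ∂P) * x j from by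
        rw [integral_mul_const, integral_const_mul]]
      ring
    rw [key]
    exact integral_nonneg fun ω => sq_nonneg _

/-- The combiner-dependent lower bound: with F = E[uuᵀ], S = E[vvᵀ], Φᵀ = E[uvᵀ],
for any combiner W with Wᵀ S W invertible, 0 ⪯ Φᵀ W (Wᵀ S W)⁻¹ Wᵀ Φ ⪯ F. -/
theorem combiner_lower_bound
    {Ω : Type*} [MeasurableSpace Ω] (P : Measure Ω) [IsProbabilityMeasure P]
    {n M : ℕ} (u : Ω → Fin n → ℝ) (v : Ω → Fin M → ℝ)
    (huu : ∀ i j, Integrable (fun ω => u ω i * u ω j) P)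
    (huv : ∀ i k, Integrable (fun ω => u ω i * v ω k) P)
    (hvv : ∀ k l, Integrable (fun ω => v ω k * v ω l) P)
    (F : Matrix (Fin n) (Fin n) ℝ) (S : Matrix (Fin M) (Fin M) ℝ)
    (Φ : Matrix (Fin M) (Fin n) ℝ)
    (hF : F = Matrix.of fun i j => ∫ ω, u ω i * u ω j ∂P)
    (hS : S = Matrix.of fun k l => ∫ ω, v ω k * v ω l ∂P)
    (hΦ : Φᵀ = Matrix.of fun i k => ∫ ω, u ω i * v ω k ∂P)
    (W : Matrix (Fin M) (Fin n) ℝ) (hW : IsUnit (Wᵀ * S * W)) :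
    (Φᵀ * W * (Wᵀ * S * W)⁻¹ * Wᵀ * Φ).PosSemidef ∧
    (F - Φᵀ * W * (Wᵀ * S * W)⁻¹ * Wᵀ * Φ).PosSemidef := by
  set G := Wᵀ * S * W with hGdef
  -- basic symmetry facts
  have hSsym : Sᵀ = S := by
    rw [hS]; ext k l
    simp only [Matrix.transpose_apply, Matrix.of_apply]
    simp_rw [mul_comm]
  have hGsym : Gᵀ = G := by
    rw [hGdef, Matrix.transpose_mul, Matrix.transpose_mul, Matrix.transpose_transpose,
      hSsym, Matrix.mul_assoc]
  have hGinvSym : (G⁻¹)ᵀ = G⁻¹ := by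
    rw [Matrix.transpose_nonsing_inv, hGsym]
  have hWdet : IsUnit G.det := (Matrix.isUnit_iff_isUnit_det G).mp hW
  have hGinvG : G⁻¹ * G = 1 := Matrix.nonsing_inv_mul G hWdet
  have hGGinv : G * G⁻¹ = 1 := Matrix.mul_nonsing_inv G hWdet
  -- S and G are PSD
  have hSpsd : S.PosSemidef := by
    rw [hS]; exact secondMoment_posSemidef P v hvv
  have hGpsd : G.PosSemidef := by
    have := psd_conj hSpsd Wᵀ
    rwa [Matrix.transpose_transpose, ← hGdef] at this
  have hGinvPsd : (G⁻¹).PosSemidef := by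
    have := psd_conj hGpsd G⁻¹
    rwa [hGinvSym, Matrix.mul_assoc, hGGinv, Matrix.mul_one] at this
  have hQpsd : (Φᵀ * W * G⁻¹ * Wᵀ * Φ).PosSemidef := by
    have h := psd_conj hGinvPsd (Φᵀ * W)
    rw [Matrix.transpose_mul, Matrix.transpose_transpose] at h
    rwa [← Matrix.mul_assoc] at h
  refine ⟨hQpsd, ?_⟩
  -- the residual
  set B := Φᵀ * W * G⁻¹ * Wᵀ with hBdef
  set w : Ω → Fin n → ℝ := fun ω i => ∑ m, B i m * v ω m with hwdef
  set z : Ω → Fin n → ℝ := fun ω i => u ω i - w ω i with hzdef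
  have huw : ∀ i j, Integrable (fun ω => u ω i * w ω j) P := by
    intro i j
    have : (fun ω => u ω i * w ω j) = fun ω => ∑ l, B j l * (u ω i * v ω l) := by
      funext ω
      simp only [hwdef, Finset.mul_sum]
      exact Finset.sum_congr rfl fun l _ => by ring
    rw [this]; exact integrable_finset_sum _ fun l _ => (huv i l).const_mul _
  have hwu : ∀ i j, Integrable (fun ω => w ω i * u ω j) P := by
    intro i j
    have : (fun ω => w ω i * u ω j) = fun ω => ∑ m, B i m * (u ω j * v ω m) := by
      funext ω
      simp only [hwdef, Finset.sum_mul]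
      exact Finset.sum_congr rfl fun m _ => by ring
    rw [this]; exact integrable_finset_sum _ fun m _ => (huv j m).const_mul _
  have hww : ∀ i j, Integrable (fun ω => w ω i * w ω j) P := by
    intro i j
    have : (fun ω => w ω i * w ω j)
        = fun ω => ∑ m, ∑ l, B i m * B j l * (v ω m * v ω l) := by
      funext ω
      simp only [hwdef, Finset.sum_mul_sum]
      exact Finset.sum_congr rfl fun m _ => Finset.sum_congr rfl fun l _ => by ring
    rw [this]
    exact integrable_finset_sum _ fun m _ =>
      integrable_finset_sum _ fun l _ => (hvv m l).const_mul _
  have hzz : ∀ i j, Integrable (fun ω => z ω i * z ω j) P := by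
    intro i j
    have : (fun ω => z ω i * z ω j) = fun ω =>
        u ω i * u ω j - u ω i * w ω j - w ω i * u ω j + w ω i * w ω j := by
      funext ω; simp only [hzdef]; ring
    rw [this]
    exact (((huu i j).sub (huw i j)).sub (hwu i j)).add (hww i j)
  -- second moment of z equals F - Q
  have hMz : (Matrix.of fun i j => ∫ ω, z ω i * z ω j ∂P)
      = F - Φᵀ * Bᵀ - B * Φ + B * S * Bᵀ := by
    ext i j
    have hsplit : (fun ω => z ω i * z ω j) = fun ω =>
        u ω i * u ω j - u ω i * w ω j - w ω i * u ω j + w ω i * w ω j := by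
      funext ω; simp only [hzdef]; ring
    have hI1 : Integrable (fun ω => u ω i * u ω j - u ω i * w ω j) P :=
      (huu i j).sub (huw i j)
    have hI2 : Integrable (fun ω => u ω i * u ω j - u ω i * w ω j - w ω i * u ω j) P :=
      hI1.sub (hwu i j)
    have h1 : ∫ ω, z ω i * z ω j ∂P
        = ∫ ω, u ω i * u ω j ∂P - ∫ ω, u ω i * w ω j ∂P
          - ∫ ω, w ω i * u ω j ∂P + ∫ ω, w ω i * w ω j ∂P := by
      rw [hsplit, integral_add hI2 (hww i j), integral_sub hI1 (hwu i j),
        integral_sub (huu i j) (huw i j)]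
    have h2 : ∫ ω, u ω i * w ω j ∂P = (Φᵀ * Bᵀ) i j := by
      have : (fun ω => u ω i * w ω j) = fun ω => ∑ l, B j l * (u ω i * v ω l) := by
        funext ω
        simp only [hwdef, Finset.mul_sum]
        exact Finset.sum_congr rfl fun l _ => by ring
      rw [this, integral_finset_sum _ fun l _ => (huv i l).const_mul _]
      simp only [Matrix.mul_apply, Matrix.transpose_apply, hΦ, Matrix.of_apply]
      simp_rw [integral_const_mul]
      exact Finset.sum_congr rfl fun l _ => by ring
    have h3 : ∫ ω, w ω i * u ω j ∂P = (B * Φ) i j := by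
      have : (fun ω => w ω i * u ω j) = fun ω => ∑ m, B i m * (u ω j * v ω m) := by
        funext ω
        simp only [hwdef, Finset.sum_mul]
        exact Finset.sum_congr rfl fun m _ => by ring
      rw [this, integral_finset_sum _ fun m _ => (huv j m).const_mul _]
      have hΦ' : ∀ m, Φ m j = ∫ ω, u ω j * v ω m ∂P := by
        intro m
        have := congrFun (congrFun hΦ j) m
        simpa using this
      simp only [Matrix.mul_apply, hΦ']
      simp_rw [integral_const_mul]
    have h4 : ∫ ω, w ω i * w ω j ∂P = (B * S * Bᵀ) i j := by
      have : (fun ω => w ω i * w ω j)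
          = fun ω => ∑ m, ∑ l, B i m * B j l * (v ω m * v ω l) := by
        funext ω
        simp only [hwdef, Finset.sum_mul_sum]
        exact Finset.sum_congr rfl fun m _ => Finset.sum_congr rfl fun l _ => by ring
      rw [this, integral_finset_sum _ fun m _ =>
        integrable_finset_sum _ fun l _ => (hvv m l).const_mul _]
      have : ∀ m, ∫ ω, ∑ l, B i m * B j l * (v ω m * v ω l) ∂P
          = ∑ l, B i m * B j l * ∫ ω, v ω m * v ω l ∂P := by
        intro m
        rw [integral_finset_sum _ fun l _ => (hvv m l).const_mul _]
        simp_rw [integral_const_mul]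
      simp_rw [this]
      simp only [Matrix.mul_apply, Matrix.transpose_apply, hS, Matrix.of_apply,
        Finset.sum_mul, Finset.mul_sum]
      rw [Finset.sum_comm]
      exact Finset.sum_congr rfl fun m _ => Finset.sum_congr rfl fun l _ => by ring
    simp only [Matrix.of_apply, h1, h2, h3, h4, hF, Matrix.sub_apply, Matrix.add_apply,
      Matrix.of_apply]
  -- matrix algebra: Φᵀ Bᵀ = Q, B Φ = Q, B S Bᵀ = Q
  have hBt : Bᵀ = W * G⁻¹ * Wᵀ * Φ := by
    rw [hBdef, Matrix.transpose_mul, Matrix.transpose_mul, Matrix.transpose_mul,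
      Matrix.transpose_transpose, Matrix.transpose_transpose, hGinvSym]
    simp [Matrix.mul_assoc]
  have e1 : Φᵀ * Bᵀ = Φᵀ * W * G⁻¹ * Wᵀ * Φ := by
    rw [hBt]; simp [Matrix.mul_assoc]
  have e2 : B * Φ = Φᵀ * W * G⁻¹ * Wᵀ * Φ := by rw [hBdef]
  have e3 : B * S * Bᵀ = Φᵀ * W * G⁻¹ * Wᵀ * Φ := by
    rw [hBt, hBdef]
    calc Φᵀ * W * G⁻¹ * Wᵀ * S * (W * G⁻¹ * Wᵀ * Φ)
        = Φᵀ * W * (G⁻¹ * (Wᵀ * S * W * (G⁻¹ * (Wᵀ * Φ)))) := by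
          simp [Matrix.mul_assoc]
      _ = Φᵀ * W * (G⁻¹ * G * (G⁻¹ * (Wᵀ * Φ))) := by
          rw [← hGdef, ← Matrix.mul_assoc G⁻¹ G]
      _ = Φᵀ * W * G⁻¹ * Wᵀ * Φ := by rw [hGinvG, Matrix.one_mul]; simp [Matrix.mul_assoc]
  have hfinal : (Matrix.of fun i j => ∫ ω, z ω i * z ω j ∂P)
      = F - Φᵀ * W * G⁻¹ * Wᵀ * Φ := by
    rw [hMz, e1, e2, e3]; abel
  have := secondMoment_posSemidef P z hzz
  rw [hfinal] at this
  exact this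
end

section
/- Let S ∈ ℝ^{M×M} be a symmetric positive definite matrix, and let Φ, W ∈ ℝ^{M×n} be real matrices such that Wᵀ S W is invertible. Then Φᵀ W (Wᵀ S W)⁻¹ Wᵀ Φ ⪯ Φᵀ S⁻¹ Φ in the Loewner order, i.e., Φᵀ S⁻¹ Φ − Φᵀ W (Wᵀ S W)⁻¹ Wᵀ Φ is positive semidefinite. -/
open Matrix

/-- Optimality of the combiner W★ = S⁻¹Φ: for any W with Wᵀ S W invertible,
Φᵀ W (Wᵀ S W)⁻¹ Wᵀ Φ ⪯ Φᵀ S⁻¹ Φ in the Loewner order. -/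
theorem combiner_bound_le_pearson
    {M n : ℕ} (S : Matrix (Fin M) (Fin M) ℝ) (hS : S.PosDef)
    (Φ W : Matrix (Fin M) (Fin n) ℝ) (hW : IsUnit (Wᵀ * S * W)) :
    (Φᵀ * S⁻¹ * Φ - Φᵀ * W * (Wᵀ * S * W)⁻¹ * Wᵀ * Φ).PosSemidef := by
  classical
  set R := (open scoped MatrixOrder in CFC.sqrt S) with hRdef
  have hRR : R * R = S := (open scoped MatrixOrder in CFC.sqrt_mul_sqrt_self S hS.posSemidef.nonneg)
  have hRsym : Rᵀ = R := by
    have h : Rᴴ = R := (open scoped MatrixOrder in (CFC.sqrt_nonneg S).posSemidef.1)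
    rwa [Matrix.conjTranspose_eq_transpose_of_trivial] at h
  have hSsym : Sᵀ = S := by
    have h : Sᴴ = S := hS.isHermitian
    rwa [Matrix.conjTranspose_eq_transpose_of_trivial] at h
  have hSdet : S.det ≠ 0 := hS.det_pos.ne'
  have hRdet : IsUnit R.det := by
    refine isUnit_iff_ne_zero.mpr fun h => hSdet ?_
    rw [← hRR, Matrix.det_mul, h, mul_zero]
  have hTR : R⁻¹ * R = 1 := Matrix.nonsing_inv_mul R hRdet
  have hRT : R * R⁻¹ = 1 := Matrix.mul_nonsing_inv R hRdet
  have hSinv : S⁻¹ = R⁻¹ * R⁻¹ := by rw [← hRR, Matrix.mul_inv_rev]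
  have hGsym : (Wᵀ * S * W)ᵀ = Wᵀ * S * W := by
    rw [Matrix.transpose_mul, Matrix.transpose_mul, Matrix.transpose_transpose, hSsym,
      Matrix.mul_assoc]
  have hGinvsym : ((Wᵀ * S * W)⁻¹)ᵀ = (Wᵀ * S * W)⁻¹ := by
    rw [Matrix.transpose_nonsing_inv, hGsym]
  have hGmul : (Wᵀ * S * W)⁻¹ * (Wᵀ * S * W) = 1 :=
    Matrix.nonsing_inv_mul _ ((Matrix.isUnit_iff_isUnit_det _).mp hW)
  set Q := R * W * (Wᵀ * S * W)⁻¹ * Wᵀ * R with hQdef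
  have hQsym : Qᵀ = Q := by
    simp only [hQdef, Matrix.transpose_mul, Matrix.transpose_transpose, hRsym, hGinvsym]
    simp [Matrix.mul_assoc]
  have hQidem : Q * Q = Q := by
    have h1 : Q * Q = R * W * ((Wᵀ * S * W)⁻¹ * (Wᵀ * (R * R) * W) * (Wᵀ * S * W)⁻¹) * Wᵀ * R := by
      simp only [hQdef, Matrix.mul_assoc]
    rw [h1, hRR, hGmul, Matrix.one_mul, hQdef]
  have hIQ : ((1 : Matrix (Fin M) (Fin M) ℝ) - Q).PosSemidef := by
    have h1 : (1 - Q) * (1 - Q)ᴴ = 1 - Q := by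
      rw [Matrix.conjTranspose_eq_transpose_of_trivial, Matrix.transpose_sub,
        Matrix.transpose_one, hQsym, Matrix.sub_mul, Matrix.mul_sub, Matrix.mul_sub,
        Matrix.one_mul, Matrix.mul_one, hQidem]
      rw [Matrix.one_mul]
      abel
    have h2 := Matrix.posSemidef_self_mul_conjTranspose (1 - Q)
    rwa [h1] at h2
  have hTsym : (R⁻¹)ᵀ = R⁻¹ := by rw [Matrix.transpose_nonsing_inv, hRsym]
  have hA : (R⁻¹ * (1 - Q) * R⁻¹).PosSemidef := by
    have h := hIQ.mul_mul_conjTranspose_same (R⁻¹)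
    rwa [Matrix.conjTranspose_eq_transpose_of_trivial, hTsym] at h
  have hAeq : R⁻¹ * (1 - Q) * R⁻¹ = S⁻¹ - W * (Wᵀ * S * W)⁻¹ * Wᵀ := by
    rw [Matrix.mul_sub, Matrix.sub_mul, Matrix.mul_one, hSinv]
    congr 1
    calc R⁻¹ * Q * R⁻¹
        = (R⁻¹ * R) * (W * ((Wᵀ * S * W)⁻¹ * (Wᵀ * (R * R⁻¹)))) := by
          simp only [hQdef, Matrix.mul_assoc]
      _ = W * (Wᵀ * S * W)⁻¹ * Wᵀ := by
          rw [hTR, hRT, Matrix.mul_one, Matrix.one_mul]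
          simp only [Matrix.mul_assoc]
  have key : (S⁻¹ - W * (Wᵀ * S * W)⁻¹ * Wᵀ).PosSemidef := hAeq ▸ hA
  have final := key.conjTranspose_mul_mul_same Φ
  rw [Matrix.conjTranspose_eq_transpose_of_trivial] at final
  have expand : Φᵀ * (S⁻¹ - W * (Wᵀ * S * W)⁻¹ * Wᵀ) * Φ
      = Φᵀ * S⁻¹ * Φ - Φᵀ * W * (Wᵀ * S * W)⁻¹ * Wᵀ * Φ := by
    rw [Matrix.mul_sub, Matrix.sub_mul]
    simp [Matrix.mul_assoc]
  rwa [expand] at final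
end

section
/- Let (Ω, P) be a probability space and let u : Ω → ℝ^n and v : Ω → ℝ^M be random vectors such that all entrywise products u_i u_j, u_i v_k, and v_k v_l are integrable. Set F = E[u uᵀ], S = E[v vᵀ], let Φ ∈ ℝ^{M×n} satisfy Φᵀ = E[u vᵀ], and assume S is positive definite. For any L ∈ ℝ^{M×n}, define m = Lᵀ v and d = u − m. Then E[m mᵀ] + E[m dᵀ] + E[d mᵀ] ⪯ Φᵀ S⁻¹ Φ ⪯ F in the Loewner order. -/
open MeasureTheory Matrix

/-- Second moment matrices are positive semidefinite. -/
lemma second_moment_psd {Ω : Type*} [MeasurableSpace Ω] (P : Measure Ω)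
    {n : ℕ} (w : Ω → Fin n → ℝ)
    (h : ∀ i j, Integrable (fun ω => w ω i * w ω j) P) :
    (Matrix.of fun i j => ∫ ω, w ω i * w ω j ∂P).PosSemidef := by
  rw [posSemidef_iff_dotProduct_mulVec]
  constructor
  · ext i j
    simp only [conjTranspose_apply, of_apply, star_trivial]
    simp_rw [mul_comm]
  · intro x
    have key : (star x) ⬝ᵥ (Matrix.of fun i j => ∫ ω, w ω i * w ω j ∂P) *ᵥ x
        = ∫ ω, (∑ i, x i * w ω i) ^ 2 ∂P := by
      calc (star x) ⬝ᵥ (Matrix.of fun i j => ∫ ω, w ω i * w ω j ∂P) *ᵥ x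
          = ∑ i, ∑ j, (x i * x j) * ∫ ω, w ω i * w ω j ∂P := by
            simp only [dotProduct, mulVec, of_apply, star_trivial, Finset.mul_sum]
            exact Finset.sum_congr rfl fun i _ => Finset.sum_congr rfl fun j _ => by ring
        _ = ∑ i, ∑ j, ∫ ω, (x i * x j) * (w ω i * w ω j) ∂P := by
            simp [integral_const_mul]
        _ = ∫ ω, ∑ i, ∑ j, (x i * x j) * (w ω i * w ω j) ∂P := by
            rw [integral_finset_sum _ (fun i _ =>
              integrable_finset_sum _ fun j _ => (h i j).const_mul _)]
            exact Finset.sum_congr rfl fun i _ =>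
              (integral_finset_sum _ fun j _ => (h i j).const_mul _).symm
        _ = ∫ ω, (∑ i, x i * w ω i) ^ 2 ∂P := by
            congr 1
            funext ω
            rw [sq, Finset.sum_mul_sum]
            exact Finset.sum_congr rfl fun i _ => Finset.sum_congr rfl fun j _ => by ring
    rw [key]
    exact integral_nonneg fun ω => sq_nonneg _

/-- Computation of the second moment matrix of `u - Aᵀ v`. -/
lemma moment_calc {Ω : Type*} [MeasurableSpace Ω] (P : Measure Ω)
    {n M : ℕ} (u : Ω → Fin n → ℝ) (v : Ω → Fin M → ℝ)
    (huu : ∀ i j, Integrable (fun ω => u ω i * u ω j) P)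
    (huv : ∀ i k, Integrable (fun ω => u ω i * v ω k) P)
    (hvv : ∀ k l, Integrable (fun ω => v ω k * v ω l) P)
    (F : Matrix (Fin n) (Fin n) ℝ) (S : Matrix (Fin M) (Fin M) ℝ)
    (Φ : Matrix (Fin M) (Fin n) ℝ)
    (hF : F = Matrix.of fun i j => ∫ ω, u ω i * u ω j ∂P)
    (hS : S = Matrix.of fun k l => ∫ ω, v ω k * v ω l ∂P)
    (hΦ : Φᵀ = Matrix.of fun i k => ∫ ω, u ω i * v ω k ∂P)
    (A : Matrix (Fin M) (Fin n) ℝ) :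
    (∀ i j, Integrable
      (fun ω => (u ω i - ∑ k, A k i * v ω k) * (u ω j - ∑ k, A k j * v ω k)) P) ∧
    (Matrix.of fun i j =>
        ∫ ω, (u ω i - ∑ k, A k i * v ω k) * (u ω j - ∑ k, A k j * v ω k) ∂P)
      = F - Φᵀ * A - Aᵀ * Φ + Aᵀ * S * A := by
  have heq : ∀ i j ω, (u ω i - ∑ k, A k i * v ω k) * (u ω j - ∑ k, A k j * v ω k)
      = u ω i * u ω j - (∑ k, A k j * (u ω i * v ω k))
        - (∑ k, A k i * (u ω j * v ω k))
        + ∑ k, ∑ l, (A k i * A l j) * (v ω k * v ω l) := by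
    intro i j ω
    have e1 : u ω i * ∑ k, A k j * v ω k = ∑ k, A k j * (u ω i * v ω k) := by
      rw [Finset.mul_sum]; exact Finset.sum_congr rfl fun k _ => by ring
    have e2 : (∑ k, A k i * v ω k) * u ω j = ∑ k, A k i * (u ω j * v ω k) := by
      rw [Finset.sum_mul]; exact Finset.sum_congr rfl fun k _ => by ring
    have e3 : (∑ k, A k i * v ω k) * (∑ l, A l j * v ω l)
        = ∑ k, ∑ l, (A k i * A l j) * (v ω k * v ω l) := by
      rw [Finset.sum_mul_sum]
      exact Finset.sum_congr rfl fun k _ => Finset.sum_congr rfl fun l _ => by ring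
    calc (u ω i - ∑ k, A k i * v ω k) * (u ω j - ∑ k, A k j * v ω k)
        = u ω i * u ω j - u ω i * (∑ k, A k j * v ω k)
          - (∑ k, A k i * v ω k) * u ω j
          + (∑ k, A k i * v ω k) * (∑ l, A l j * v ω l) := by ring
      _ = _ := by rw [e1, e2, e3]
  have I2 : ∀ i j, Integrable (fun ω => ∑ k, A k j * (u ω i * v ω k)) P :=
    fun i j => integrable_finset_sum _ fun k _ => (huv i k).const_mul _
  have I3 : ∀ i j, Integrable (fun ω => ∑ k, A k i * (u ω j * v ω k)) P :=
    fun i j => integrable_finset_sum _ fun k _ => (huv j k).const_mul _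
  have I4 : ∀ i j, Integrable
      (fun ω => ∑ k, ∑ l, (A k i * A l j) * (v ω k * v ω l)) P :=
    fun i j => integrable_finset_sum _ fun k _ =>
      integrable_finset_sum _ fun l _ => (hvv k l).const_mul _
  have I12 : ∀ i j, Integrable
      (fun ω => u ω i * u ω j - ∑ k, A k j * (u ω i * v ω k)) P :=
    fun i j => (huu i j).sub (I2 i j)
  have I123 : ∀ i j, Integrable
      (fun ω => u ω i * u ω j - (∑ k, A k j * (u ω i * v ω k))
        - ∑ k, A k i * (u ω j * v ω k)) P :=
    fun i j => (I12 i j).sub (I3 i j)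
  have hint : ∀ i j, Integrable
      (fun ω => (u ω i - ∑ k, A k i * v ω k) * (u ω j - ∑ k, A k j * v ω k)) P := by
    intro i j
    have := (I123 i j).add (I4 i j)
    exact this.congr (ae_of_all _ fun ω => (heq i j ω).symm)
  refine ⟨hint, ?_⟩
  have hΦ' : ∀ i k, Φ k i = ∫ ω, u ω i * v ω k ∂P := by
    intro i k
    have := congrFun (congrFun hΦ i) k
    simpa using this
  have hΦ'' : ∀ (i : Fin n) (k : Fin M), Φᵀ i k = ∫ ω, u ω i * v ω k ∂P := by
    intro i k; rw [hΦ]; rfl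
  ext i j
  have hrw : (fun ω => (u ω i - ∑ k, A k i * v ω k) * (u ω j - ∑ k, A k j * v ω k))
      = fun ω => u ω i * u ω j - (∑ k, A k j * (u ω i * v ω k))
        - (∑ k, A k i * (u ω j * v ω k))
        + ∑ k, ∑ l, (A k i * A l j) * (v ω k * v ω l) := funext (heq i j)
  simp only [of_apply]
  rw [hrw, integral_add (I123 i j) (I4 i j),
    integral_sub (I12 i j) (I3 i j),
    integral_sub (huu i j) (I2 i j),
    integral_finset_sum _ (fun k _ => (huv i k).const_mul _),
    integral_finset_sum _ (fun k _ => (huv j k).const_mul _),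
    integral_finset_sum _ (fun (k : Fin M) _ =>
      integrable_finset_sum Finset.univ fun l _ => (hvv k l).const_mul (A k i * A l j))]
  simp only [integral_const_mul]
  have h4 : ∀ k : Fin M, ∫ ω, ∑ l, (A k i * A l j) * (v ω k * v ω l) ∂P
      = ∑ l, (A k i * A l j) * ∫ ω, v ω k * v ω l ∂P := by
    intro k
    rw [integral_finset_sum _ (fun l _ => (hvv k l).const_mul _)]
    simp [integral_const_mul]
  simp only [h4]
  -- now identify each piece with the matrix entries
  have hFij : F i j = ∫ ω, u ω i * u ω j ∂P := by rw [hF]; rfl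
  have r1 : (Φᵀ * A) i j = ∑ k, A k j * ∫ ω, u ω i * v ω k ∂P := by
    rw [Matrix.mul_apply]
    exact Finset.sum_congr rfl fun k _ => by rw [hΦ'', mul_comm]
  have r2 : (Aᵀ * Φ) i j = ∑ k, A k i * ∫ ω, u ω j * v ω k ∂P := by
    rw [Matrix.mul_apply]
    exact Finset.sum_congr rfl fun k _ => by rw [Matrix.transpose_apply, hΦ']
  have r3 : (Aᵀ * S * A) i j
      = ∑ k, ∑ l, (A k i * A l j) * ∫ ω, v ω k * v ω l ∂P := by
    calc (Aᵀ * S * A) i j = ∑ l, ∑ k, (A k i * S k l) * A l j := by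
          simp [Matrix.mul_apply, Finset.sum_mul, Matrix.transpose_apply]
      _ = ∑ k, ∑ l, (A k i * A l j) * ∫ ω, v ω k * v ω l ∂P := by
          rw [Finset.sum_comm]
          refine Finset.sum_congr rfl fun k _ => Finset.sum_congr rfl fun l _ => ?_
          have : S k l = ∫ ω, v ω k * v ω l ∂P := by rw [hS]; rfl
          rw [this]; ring
  rw [Matrix.add_apply, Matrix.sub_apply, Matrix.sub_apply, hFij, r1, r2, r3]

/-- Theorem 2 in probabilistic form: for any L, with m = Lᵀv and d = u − m,
E[mmᵀ] + E[mdᵀ] + E[dmᵀ] ⪯ Φᵀ S⁻¹ Φ ⪯ F = E[uuᵀ] in the Loewner order. -/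
theorem theorem2_probabilistic
    {Ω : Type*} [MeasurableSpace Ω] (P : Measure Ω) [IsProbabilityMeasure P]
    {n M : ℕ} (u : Ω → Fin n → ℝ) (v : Ω → Fin M → ℝ)
    (huu : ∀ i j, Integrable (fun ω => u ω i * u ω j) P)
    (huv : ∀ i k, Integrable (fun ω => u ω i * v ω k) P)
    (hvv : ∀ k l, Integrable (fun ω => v ω k * v ω l) P)
    (F : Matrix (Fin n) (Fin n) ℝ) (S : Matrix (Fin M) (Fin M) ℝ)
    (Φ L : Matrix (Fin M) (Fin n) ℝ)
    (hF : F = Matrix.of fun i j => ∫ ω, u ω i * u ω j ∂P)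
    (hS : S = Matrix.of fun k l => ∫ ω, v ω k * v ω l ∂P)
    (hΦ : Φᵀ = Matrix.of fun i k => ∫ ω, u ω i * v ω k ∂P)
    (hSpd : S.PosDef)
    (m d : Ω → Fin n → ℝ)
    (hm : ∀ ω, m ω = Lᵀ.mulVec (v ω))
    (hd : ∀ ω, d ω = u ω - m ω) :
    (Φᵀ * S⁻¹ * Φ -
      ((Matrix.of fun i j => ∫ ω, m ω i * m ω j ∂P) +
       (Matrix.of fun i j => ∫ ω, m ω i * d ω j ∂P) +
       (Matrix.of fun i j => ∫ ω, d ω i * m ω j ∂P))).PosSemidef ∧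
    (F - Φᵀ * S⁻¹ * Φ).PosSemidef := by
  have hdet : IsUnit S.det := isUnit_iff_ne_zero.mpr hSpd.det_pos.ne'
  have hSS : S * S⁻¹ = 1 := Matrix.mul_nonsing_inv S hdet
  have hSS' : S⁻¹ * S = 1 := Matrix.nonsing_inv_mul S hdet
  have hSt : Sᵀ = S := by simpa [Matrix.IsSymm] using hSpd.isHermitian
  have hSit : S⁻¹ᵀ = S⁻¹ := by
    rw [Matrix.transpose_nonsing_inv, hSt]
  -- pointwise descriptions
  have hm' : ∀ ω i, m ω i = ∑ k, L k i * v ω k := by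
    intro ω i; rw [hm]; simp [Matrix.mulVec, dotProduct]
  have hdi : ∀ ω i, d ω i = u ω i - m ω i := by
    intro ω i; rw [hd]; simp
  have hd' : ∀ ω i, d ω i = u ω i - ∑ k, L k i * v ω k := by
    intro ω i; rw [hdi, hm']
  -- second part: take A = S⁻¹ * Φ
  obtain ⟨hintK, heqK⟩ := moment_calc P u v huu huv hvv F S Φ hF hS hΦ (S⁻¹ * Φ)
  have hKt : (S⁻¹ * Φ)ᵀ = Φᵀ * S⁻¹ := by rw [Matrix.transpose_mul, hSit]
  have hFexp : F - Φᵀ * S⁻¹ * Φ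
      = (Matrix.of fun i j =>
          ∫ ω, (u ω i - ∑ k, (S⁻¹ * Φ) k i * v ω k)
            * (u ω j - ∑ k, (S⁻¹ * Φ) k j * v ω k) ∂P) := by
    rw [heqK, hKt]
    have e1 : Φᵀ * (S⁻¹ * Φ) = Φᵀ * S⁻¹ * Φ := by rw [Matrix.mul_assoc]
    have e2 : Φᵀ * S⁻¹ * S * (S⁻¹ * Φ) = Φᵀ * S⁻¹ * Φ := by
      rw [Matrix.mul_assoc (Φᵀ * S⁻¹), ← Matrix.mul_assoc S, hSS, Matrix.one_mul]
    rw [e1, e2]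
    abel
  have part2 : (F - Φᵀ * S⁻¹ * Φ).PosSemidef := by
    rw [hFexp]
    exact second_moment_psd P (fun ω i => u ω i - ∑ k, (S⁻¹ * Φ) k i * v ω k) hintK
  -- first part
  obtain ⟨hintL, heqL⟩ := moment_calc P u v huu huv hvv F S Φ hF hS hΦ L
  -- integrability of m,d products
  have Imm : ∀ i j, Integrable (fun ω => m ω i * m ω j) P := by
    intro i j
    have h0 : Integrable (fun ω => ∑ k, ∑ l, (L k i * L l j) * (v ω k * v ω l)) P :=
      integrable_finset_sum _ fun k _ =>
        integrable_finset_sum _ fun l _ => (hvv k l).const_mul _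
    refine h0.congr (ae_of_all _ fun ω => ?_)
    simp only [hm']
    rw [Finset.sum_mul_sum]
    exact Finset.sum_congr rfl fun k _ => Finset.sum_congr rfl fun l _ => by ring
  have Imu : ∀ i j, Integrable (fun ω => m ω i * u ω j) P := by
    intro i j
    have h0 : Integrable (fun ω => ∑ k, L k i * (u ω j * v ω k)) P :=
      integrable_finset_sum _ fun k _ => (huv j k).const_mul _
    refine h0.congr (ae_of_all _ fun ω => ?_)
    simp only [hm']
    rw [Finset.sum_mul]
    exact Finset.sum_congr rfl fun k _ => by ring
  have Imd : ∀ i j, Integrable (fun ω => m ω i * d ω j) P := by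
    intro i j
    have h0 : Integrable (fun ω => m ω i * u ω j - m ω i * m ω j) P :=
      (Imu i j).sub (Imm i j)
    refine h0.congr (ae_of_all _ fun ω => ?_)
    simp only [hdi]
    ring
  have Idm : ∀ i j, Integrable (fun ω => d ω i * m ω j) P := by
    intro i j
    have hum : Integrable (fun ω => u ω i * m ω j) P :=
      (Imu j i).congr (ae_of_all _ fun ω => by simp only []; ring)
    have h0 : Integrable (fun ω => u ω i * m ω j - m ω i * m ω j) P :=
      hum.sub (Imm i j)
    refine h0.congr (ae_of_all _ fun ω => ?_)
    simp only [hdi]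
    ring
  have Idd : ∀ i j, Integrable (fun ω => d ω i * d ω j) P := by
    intro i j
    refine (hintL i j).congr (ae_of_all _ fun ω => ?_)
    simp only [hd']
  -- E[mm] + E[md] + E[dm] = F - E[dd]
  have hsum : (Matrix.of fun i j => ∫ ω, m ω i * m ω j ∂P) +
       (Matrix.of fun i j => ∫ ω, m ω i * d ω j ∂P) +
       (Matrix.of fun i j => ∫ ω, d ω i * m ω j ∂P)
      = F - (Matrix.of fun i j => ∫ ω, d ω i * d ω j ∂P) := by
    ext i j
    simp only [Matrix.add_apply, Matrix.sub_apply, of_apply]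
    have Jmmmd : Integrable (fun ω => m ω i * m ω j + m ω i * d ω j) P :=
      (Imm i j).add (Imd i j)
    have hFij : F i j = ∫ ω, u ω i * u ω j ∂P := by rw [hF]; rfl
    rw [← integral_add (Imm i j) (Imd i j), ← integral_add Jmmmd (Idm i j), hFij,
      ← integral_sub (huu i j) (Idd i j)]
    refine integral_congr_ae (ae_of_all _ fun ω => ?_)
    simp only [hdi]
    ring
  have hdd : (Matrix.of fun i j => ∫ ω, d ω i * d ω j ∂P)
      = F - Φᵀ * L - Lᵀ * Φ + Lᵀ * S * L := by
    rw [← heqL]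
    ext i j
    simp only [of_apply]
    refine integral_congr_ae (ae_of_all _ fun ω => ?_)
    simp only [hd']
  have key1 : Φᵀ * S⁻¹ * Φ -
      ((Matrix.of fun i j => ∫ ω, m ω i * m ω j ∂P) +
       (Matrix.of fun i j => ∫ ω, m ω i * d ω j ∂P) +
       (Matrix.of fun i j => ∫ ω, d ω i * m ω j ∂P))
      = (Φ - S * L)ᵀ * S⁻¹ * (Φ - S * L) := by
    rw [hsum, hdd]
    have ht : (Φ - S * L)ᵀ = Φᵀ - Lᵀ * S := by
      rw [Matrix.transpose_sub, Matrix.transpose_mul, hSt]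
    have e1 : (Φᵀ - Lᵀ * S) * S⁻¹ = Φᵀ * S⁻¹ - Lᵀ := by
      rw [Matrix.sub_mul, Matrix.mul_assoc, hSS, Matrix.mul_one]
    have e2 : Φᵀ * S⁻¹ * (S * L) = Φᵀ * L := by
      rw [Matrix.mul_assoc Φᵀ, ← Matrix.mul_assoc S⁻¹, hSS', Matrix.one_mul]
    rw [ht, e1, Matrix.sub_mul, Matrix.mul_sub, Matrix.mul_sub, e2,
      ← Matrix.mul_assoc Lᵀ S L]
    abel
  have part1 : (Φᵀ * S⁻¹ * Φ -
      ((Matrix.of fun i j => ∫ ω, m ω i * m ω j ∂P) +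
       (Matrix.of fun i j => ∫ ω, m ω i * d ω j ∂P) +
       (Matrix.of fun i j => ∫ ω, d ω i * m ω j ∂P))).PosSemidef := by
    rw [key1]
    have := (hSpd.inv.posSemidef).conjTranspose_mul_mul_same (Φ - S * L)
    simpa using this
  exact ⟨part1, part2⟩
end

section
/- Let S ∈ ℝ^{M×M} be symmetric positive definite, c ∈ ℝ^M, κ ∈ ℝ with κ − cᵀ S⁻¹ c > 0, and let Φ ∈ ℝ^{M×n} and d ∈ ℝ^n. Let S₊ = [[S, c], [cᵀ, κ]] ∈ ℝ^{(M+1)×(M+1)} and let Φ₊ ∈ ℝ^{(M+1)×n} be obtained by appending the row dᵀ to Φ. Then Φᵀ S⁻¹ Φ ⪯ Φ₊ᵀ S₊⁻¹ Φ₊ in the Loewner order; that is, the Pearson information matrix can never decrease when an additional statistic is included. -/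
open Matrix

lemma psd_smul_vecMulVec {k : Type*} [Fintype k] (a : ℝ) (ha : 0 ≤ a) (w : k → ℝ) :
    (a • vecMulVec w w).PosSemidef := by
  rw [posSemidef_iff_dotProduct_mulVec]
  constructor
  · ext i j
    simp [vecMulVec, conjTranspose, mul_comm]
  · intro x
    have h : star x ⬝ᵥ (a • vecMulVec w w) *ᵥ x = a * ((w ⬝ᵥ x) * (w ⬝ᵥ x)) := by
      simp only [dotProduct, mulVec, vecMulVec, Matrix.smul_apply, of_apply, star_trivial,
        Finset.mul_sum, Finset.sum_mul, smul_eq_mul]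
      congr 1; ext i
      congr 1; ext j; ring
    rw [h]
    have := mul_self_nonneg (w ⬝ᵥ x)
    positivity

/-- Theorem 3: the Pearson information matrix can never decrease when an additional
statistic is included: Φᵀ S⁻¹ Φ ⪯ Φ₊ᵀ S₊⁻¹ Φ₊ where S₊ = [[S, c], [cᵀ, κ]] and
Φ₊ appends the row dᵀ to Φ. -/
theorem pearson_monotone_in_statistics
    {M n : ℕ} (S : Matrix (Fin M) (Fin M) ℝ) (hS : S.PosDef)
    (c : Fin M → ℝ) (κ : ℝ) (hκ : 0 < κ - c ⬝ᵥ S⁻¹.mulVec c)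
    (Φ : Matrix (Fin M) (Fin n) ℝ) (d : Fin n → ℝ) :
    ((Matrix.fromRows Φ (Matrix.of fun (_ : Fin 1) j => d j))ᵀ *
      (Matrix.fromBlocks S
        (Matrix.of fun i (_ : Fin 1) => c i)
        (Matrix.of fun (_ : Fin 1) j => c j)
        (Matrix.of fun (_ : Fin 1) (_ : Fin 1) => κ))⁻¹ *
      (Matrix.fromRows Φ (Matrix.of fun (_ : Fin 1) j => d j)) -
      Φᵀ * S⁻¹ * Φ).PosSemidef := by
  have hdet : IsUnit S.det := hS.det_pos.ne'.isUnit
  have hSinv' : S * S⁻¹ = 1 := mul_nonsing_inv S hdet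
  set y : Fin M → ℝ := S⁻¹ *ᵥ c with hy
  set σ : ℝ := κ - c ⬝ᵥ y with hσdef
  have hσ : 0 < σ := hκ
  have hσ' : σ ≠ 0 := hσ.ne'
  have hSy : ∀ i, ∑ k, S i k * y k = c i := by
    intro i
    have := congrFun (show S *ᵥ y = c by rw [hy, mulVec_mulVec, hSinv', one_mulVec]) i
    simpa [mulVec, dotProduct] using this
  have hSinvT : S⁻¹ᵀ = S⁻¹ := hS.isHermitian.inv
  have hySymm : ∀ j, ∑ k, c k * S⁻¹ k j = y j := by
    intro j
    have := congrFun (show c ᵥ* S⁻¹ = y by rw [hy, ← mulVec_transpose, hSinvT]) j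
    simpa [vecMul, dotProduct] using this
  have hcy : c ⬝ᵥ y = κ - σ := by rw [hσdef]; ring
  set T : Matrix (Fin M ⊕ Fin 1) (Fin M ⊕ Fin 1) ℝ :=
    fromBlocks (S⁻¹ + σ⁻¹ • vecMulVec y y)
      (Matrix.of fun i (_ : Fin 1) => -σ⁻¹ * y i)
      (Matrix.of fun (_ : Fin 1) j => -σ⁻¹ * y j)
      (Matrix.of fun (_ : Fin 1) (_ : Fin 1) => σ⁻¹) with hT
  set Sp := (Matrix.fromBlocks S
        (Matrix.of fun i (_ : Fin 1) => c i)
        (Matrix.of fun (_ : Fin 1) j => c j)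
        (Matrix.of fun (_ : Fin 1) (_ : Fin 1) => κ)) with hSp
  have hinv : Sp⁻¹ = T := by
    apply inv_eq_right_inv
    have e11 : S * (S⁻¹ + σ⁻¹ • vecMulVec y y) +
        (Matrix.of fun i (_ : Fin 1) => c i) * (Matrix.of fun (_ : Fin 1) j => -σ⁻¹ * y j)
        = (1 : Matrix (Fin M) (Fin M) ℝ) := by
      have h1 : S * (σ⁻¹ • vecMulVec y y) = σ⁻¹ • vecMulVec c y := by
        rw [Matrix.mul_smul]
        congr 1
        ext i j
        simp only [mul_apply, vecMulVec_apply, of_apply]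
        rw [show (∑ k, S i k * (y k * y j)) = (∑ k, S i k * y k) * y j by
          rw [Finset.sum_mul]; congr 1; ext k; ring, hSy i]
      have h2 : (Matrix.of fun i (_ : Fin 1) => c i) *
          (Matrix.of fun (_ : Fin 1) j => -σ⁻¹ * y j) = -(σ⁻¹ • vecMulVec c y) := by
        ext i j
        simp [mul_apply, vecMulVec_apply]
        ring
      rw [Matrix.mul_add, hSinv', h1, h2]
      abel
    have e12 : S * (Matrix.of fun i (_ : Fin 1) => -σ⁻¹ * y i) +
        (Matrix.of fun i (_ : Fin 1) => c i) * (Matrix.of fun (_ : Fin 1) (_ : Fin 1) => σ⁻¹)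
        = 0 := by
      ext i j
      simp only [Matrix.add_apply, mul_apply, of_apply, Matrix.zero_apply,
        Fin.sum_univ_one]
      rw [show (∑ k, S i k * (-σ⁻¹ * y k)) = -σ⁻¹ * (∑ k, S i k * y k) by
        rw [Finset.mul_sum]; congr 1; ext k; ring, hSy i]
      ring
    have e21 : (Matrix.of fun (_ : Fin 1) j => c j) * (S⁻¹ + σ⁻¹ • vecMulVec y y) +
        (Matrix.of fun (_ : Fin 1) (_ : Fin 1) => κ) *
          (Matrix.of fun (_ : Fin 1) j => -σ⁻¹ * y j) = 0 := by
      ext i j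
      simp only [Matrix.add_apply, mul_apply, of_apply, Matrix.zero_apply,
        Fin.sum_univ_one, Matrix.smul_apply, vecMulVec_apply, smul_eq_mul]
      have hsplit : ∑ k, c k * (S⁻¹ k j + σ⁻¹ * (y k * y j))
          = (∑ k, c k * S⁻¹ k j) + σ⁻¹ * (∑ k, c k * y k) * y j := by
        rw [Finset.mul_sum, Finset.sum_mul, ← Finset.sum_add_distrib]
        exact Finset.sum_congr rfl fun k _ => by ring
      rw [hsplit, hySymm j, show (∑ k, c k * y k) = c ⬝ᵥ y from rfl, hcy]
      field_simp
      ring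
    have e22 : (Matrix.of fun (_ : Fin 1) j => c j) *
          (Matrix.of fun i (_ : Fin 1) => -σ⁻¹ * y i) +
        (Matrix.of fun (_ : Fin 1) (_ : Fin 1) => κ) *
          (Matrix.of fun (_ : Fin 1) (_ : Fin 1) => σ⁻¹)
        = (1 : Matrix (Fin 1) (Fin 1) ℝ) := by
      ext i j
      simp only [Matrix.add_apply, mul_apply, of_apply, Fin.sum_univ_one]
      rw [show (∑ k, c k * (-σ⁻¹ * y k)) = -σ⁻¹ * (c ⬝ᵥ y) by
        rw [dotProduct, Finset.mul_sum]; congr 1; ext k; ring, hcy,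
        Subsingleton.elim i j, Matrix.one_apply_eq]
      field_simp
      ring
    rw [hSp, hT, fromBlocks_multiply, e11, e12, e21, e22, fromBlocks_one]
  rw [hinv]
  set z : Fin M ⊕ Fin 1 → ℝ := Sum.elim y (fun _ => (-1 : ℝ)) with hz
  have hTsplit : T = fromBlocks S⁻¹ 0 0 0 + σ⁻¹ • vecMulVec z z := by
    rw [hT]
    ext (i | i) (j | j) <;>
      simp [Matrix.fromBlocks, vecMulVec_apply, hz, mul_comm]
  set D := (Matrix.of fun (_ : Fin 1) j => d j) with hD
  have hbase : (fromRows Φ D)ᵀ * (fromBlocks S⁻¹ 0 0 0 : Matrix (Fin M ⊕ Fin 1) (Fin M ⊕ Fin 1) ℝ) * fromRows Φ D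
      = Φᵀ * S⁻¹ * Φ := by
    rw [transpose_fromRows, fromCols_mul_fromBlocks, fromCols_mul_fromRows]
    simp
  have key : (fromRows Φ D)ᵀ * T * fromRows Φ D - Φᵀ * S⁻¹ * Φ
      = (fromRows Φ D)ᵀ * (σ⁻¹ • vecMulVec z z) * fromRows Φ D := by
    rw [hTsplit, Matrix.mul_add, Matrix.add_mul, hbase]
    abel
  rw [key]
  have hpsd := psd_smul_vecMulVec σ⁻¹ (by positivity) z
  have := hpsd.conjTranspose_mul_mul_same (fromRows Φ D)
  simpa using this
end
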